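/- Under the standing setup (Assumption 1) and Assumption 3, the function F(u) = E[𝒥(Bu,ξ)] is Fréchet differentiable on U₀, and the map (u,h) ↦ ⟨DF(u), h⟩ is weakly*-to-strongly continuous: if u_N ⇀* u and h_N ⇀* h in U, then ⟨DF(u_N), h_N⟩ → ⟨DF(u), h⟩. Moreover, for every ξ ∈ Ξ, the map (u,h) ↦ D_uG(u,ξ)h = D_w𝒢(Bu,ξ)Bh is weakly*-to-strongly continuous from U × U into R. -/

import Mathlib

open MeasureTheory Filter Topology TopologicalSpace
open scoped ENNReal

noncomputable section

/-- Weak-star convergence of a sequence in the dual `U = X*` of a Banach space `X`. -/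
def WSTendsto {X : Type*} [NormedAddCommGroup X] [NormedSpace ℝ X]
    (u : ℕ → StrongDual ℝ X) (u₀ : StrongDual ℝ X) : Prop :=
  ∀ x : X, Tendsto (fun n => u n x) atTop (𝓝 (u₀ x))

open Classical in
/-- The `[0,∞]`-valued indicator function `I_C` of a set: `0` on `C` and `∞` off `C`. -/
def iInd {α : Type*} (C : Set α) (a : α) : ℝ≥0∞ := if a ∈ C then 0 else ⊤

/-- Assumption 1 (standing setup): `U := StrongDual ℝ X` is the dual of the real
separable Banach space `X`; `B` is linear and weakly*-to-strongly continuous; `𝒥` is a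
nonnegative random lower semicontinuous integrand; `𝒢 : W × Ξ → R₀` is Carathéodory with
values in `R` along `B`, Carathéodory into `R` on `B(dom ψ) × Ξ`; `K ⊂ R` is a nonempty
closed convex cone; `ψ` is proper, convex, weakly* lsc with bounded weakly* closed domain;
and problem (P) has a feasible point with finite objective value. -/
structure StandingSetup (X W R R₀ Ξ Ω : Type*)
    [NormedAddCommGroup X] [NormedSpace ℝ X]
    [NormedAddCommGroup W] [NormedSpace ℝ W]
    [NormedAddCommGroup R] [NormedSpace ℝ R]
    [NormedAddCommGroup R₀] [NormedSpace ℝ R₀]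
    [MeasurableSpace R] [BorelSpace R] [MeasurableSpace R₀] [BorelSpace R₀]
    [MetricSpace Ξ] [MeasurableSpace Ξ] [BorelSpace Ξ]
    [MeasurableSpace Ω] : Type _ where
  /-- the sample probability measure -/
  P : Measure Ω
  hP : IsProbabilityMeasure P
  /-- the law `ℙ` of the random element `ξ` -/
  μ : Measure Ξ
  hμ : IsProbabilityMeasure μ
  /-- the i.i.d. samples `ξ¹, ξ², …` -/
  samp : ℕ → Ω → Ξ
  samp_meas : ∀ i, Measurable (samp i)
  samp_law : ∀ i, Measure.map (samp i) P = μ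
  samp_indep : ProbabilityTheory.iIndepFun samp P
  /-- the linear, weakly*-to-strongly continuous operator `B : U → W` -/
  B : StrongDual ℝ X →ₗ[ℝ] W
  B_wsc : ∀ (u : ℕ → StrongDual ℝ X) (u₀ : StrongDual ℝ X),
    WSTendsto u u₀ → Tendsto (fun n => B (u n)) atTop (𝓝 (B u₀))
  /-- the integrand `𝒥 : W × Ξ → [0,∞)` -/
  J : W → Ξ → ℝ
  J_nonneg : ∀ w ξ, 0 ≤ J w ξ
  /-- random lower semicontinuity of `𝒥`: lower semicontinuity in `w` … -/
  J_lsc : ∀ ξ, LowerSemicontinuous fun w => J w ξ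
  /-- … and Effros measurability of the epigraphical multifunction -/
  J_effros : ∀ O : Set (W × ℝ), IsOpen O → MeasurableSet {ξ | ∃ p ∈ O, J p.1 ξ ≤ p.2}
  /-- the control regularizer `ψ : U → [0,∞]` -/
  ψ : StrongDual ℝ X → ℝ≥0∞
  ψ_proper : ∃ u, ψ u ≠ ⊤
  ψ_convex : ∀ u v : StrongDual ℝ X, ∀ t : ℝ, 0 ≤ t → t ≤ 1 →
    ψ (t • u + (1 - t) • v) ≤ ENNReal.ofReal t * ψ u + ENNReal.ofReal (1 - t) * ψ v
  ψ_wlsc : ∀ (u : ℕ → StrongDual ℝ X) (u₀ : StrongDual ℝ X),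
    WSTendsto u u₀ → ψ u₀ ≤ atTop.liminf fun n => ψ (u n)
  ψ_dom_bdd : ∃ C : ℝ, ∀ u, ψ u ≠ ⊤ → ‖u‖ ≤ C
  ψ_dom_closed : ∀ (u : ℕ → StrongDual ℝ X) (u₀ : StrongDual ℝ X),
    (∀ n, ψ (u n) ≠ ⊤) → WSTendsto u u₀ → ψ u₀ ≠ ⊤
  /-- the nonempty closed convex cone `K ⊂ R` -/
  K : Set R
  K_ne : K.Nonempty
  K_closed : IsClosed K
  K_convex : Convex ℝ K
  K_cone : ∀ (c : ℝ) (r : R), 0 ≤ c → r ∈ K → c • r ∈ K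
  /-- the embedding witnessing `R ⊂ R₀` -/
  emb : R →ₗᵢ[ℝ] R₀
  /-- the constraint map `𝒢 : W × Ξ → R₀`, Carathéodory -/
  G₀ : W → Ξ → R₀
  G₀_cont : ∀ ξ, Continuous fun w => G₀ w ξ
  G₀_meas : ∀ w, Measurable (G₀ w)
  /-- the `R`-valued realization of `𝒢`, i.e. `𝒢(Bu,ξ) ∈ R` for all `(u,ξ)` -/
  G : W → Ξ → R
  G_compat : ∀ (u : StrongDual ℝ X) (ξ : Ξ), G₀ (B u) ξ = emb (G (B u) ξ)
  /-- `𝒢 : B(dom ψ) × Ξ → R` is Carathéodory -/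
  G_contOn : ∀ ξ, ContinuousOn (fun w => G w ξ) (B '' {u | ψ u ≠ ⊤})
  G_meas : ∀ w, Measurable (G w)
  /-- problem (P) has a feasible point with finite objective value -/
  feas_pt : ∃ u : StrongDual ℝ X, (∀ᵐ ξ ∂μ, G (B u) ξ ∈ K) ∧
    (∫⁻ ξ, ENNReal.ofReal (J (B u) ξ) ∂μ) + ψ u ≠ ⊤

namespace StandingSetup

variable {X W R R₀ Ξ Ω : Type*}
    [NormedAddCommGroup X] [NormedSpace ℝ X]
    [NormedAddCommGroup W] [NormedSpace ℝ W]
    [NormedAddCommGroup R] [NormedSpace ℝ R]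
    [NormedAddCommGroup R₀] [NormedSpace ℝ R₀]
    [MeasurableSpace R] [BorelSpace R] [MeasurableSpace R₀] [BorelSpace R₀]
    [MetricSpace Ξ] [MeasurableSpace Ξ] [BorelSpace Ξ]
    [MeasurableSpace Ω]
    (S : StandingSetup X W R R₀ Ξ Ω)

/-- the expected objective `F(u) = E[𝒥(Bu,ξ)]` -/
def F (u : StrongDual ℝ X) : ℝ≥0∞ := ∫⁻ ξ, ENNReal.ofReal (S.J (S.B u) ξ) ∂S.μ

/-- the full objective `F + ψ` of problem (P) -/
def obj (u : StrongDual ℝ X) : ℝ≥0∞ := S.F u + S.ψ u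

/-- feasibility for problem (P): `G(u,ξ) ∈ K` for `ℙ`-a.e. `ξ ∈ Ξ` -/
def Feas (u : StrongDual ℝ X) : Prop := ∀ᵐ ξ ∂S.μ, S.G (S.B u) ξ ∈ S.K

/-- solutions of problem (P) -/
def SolP (u : StrongDual ℝ X) : Prop := S.Feas u ∧ ∀ v, S.Feas v → S.obj u ≤ S.obj v

/-- the optimal value `ϑ*` of problem (P) -/
def valP : ℝ≥0∞ := ⨅ (u : StrongDual ℝ X) (_ : S.Feas u), S.obj u

/-- the SAA objective `F̂_N(·,ω)` -/
def FN (N : ℕ) (ω : Ω) (u : StrongDual ℝ X) : ℝ≥0∞ :=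
  (N : ℝ≥0∞)⁻¹ * ∑ i ∈ Finset.range N, ENNReal.ofReal (S.J (S.B u) (S.samp i ω))

/-- the full objective of the SAA problem (P_SAA) -/
def objN (N : ℕ) (ω : Ω) (u : StrongDual ℝ X) : ℝ≥0∞ := S.FN N ω u + S.ψ u

/-- feasibility for the SAA problem: `G(u,ξⁱ) ∈ K`, `i = 1, …, N` -/
def FeasN (N : ℕ) (ω : Ω) (u : StrongDual ℝ X) : Prop :=
  ∀ i ∈ Finset.range N, S.G (S.B u) (S.samp i ω) ∈ S.K

/-- solutions of the SAA problem (P_SAA) -/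
def SolN (N : ℕ) (ω : Ω) (u : StrongDual ℝ X) : Prop :=
  S.FeasN N ω u ∧ ∀ v, S.FeasN N ω v → S.objN N ω u ≤ S.objN N ω v

/-- the SAA optimal value `ϑ̂_N*` -/
def valN (N : ℕ) (ω : Ω) : ℝ≥0∞ :=
  ⨅ (u : StrongDual ℝ X) (_ : S.FeasN N ω u), S.objN N ω u

/-- the feasible-set multifunction `𝒰(ξ) = {u ∈ U ∣ G(u,ξ) ∈ K}` -/
def Uset (ξ : Ξ) : Set (StrongDual ℝ X) := {u | S.G (S.B u) ξ ∈ S.K}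

end StandingSetup

/-- Assumption 3 of the paper: compact sample space, smooth objective and constraint. -/
structure Assumption3 {X W R R₀ Ξ Ω : Type*}
    [NormedAddCommGroup X] [NormedSpace ℝ X]
    [NormedAddCommGroup W] [NormedSpace ℝ W]
    [NormedAddCommGroup R] [NormedSpace ℝ R]
    [NormedAddCommGroup R₀] [NormedSpace ℝ R₀]
    [MeasurableSpace R] [BorelSpace R] [MeasurableSpace R₀] [BorelSpace R₀]
    [MetricSpace Ξ] [CompactSpace Ξ] [MeasurableSpace Ξ] [BorelSpace Ξ]
    [MeasurableSpace Ω]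
    (S : StandingSetup X W R R₀ Ξ Ω) : Type _ where
  /-- the open set `U₀ ⊃ dom ψ` -/
  U₀ : Set (StrongDual ℝ X)
  U₀_open : IsOpen U₀
  dom_sub : {u | S.ψ u ≠ ⊤} ⊆ U₀
  /-- the open set `W₀ ⊃ B(U₀)` -/
  W₀ : Set W
  W₀_open : IsOpen W₀
  BU₀_sub : S.B '' U₀ ⊆ W₀
  /-- the Fréchet derivative `D_w𝒥` of the objective integrand -/
  DJ : W → Ξ → (W →L[ℝ] ℝ)
  DJ_deriv : ∀ ξ : Ξ, ∀ w ∈ W₀, HasFDerivAt (fun w' => S.J w' ξ) (DJ w ξ) w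
  DJ_cont : ∀ ξ : Ξ, ContinuousOn (fun w => DJ w ξ) W₀
  DJ_meas : ∀ w ∈ W₀, ∀ h : W, Measurable fun ξ => DJ w ξ h
  /-- the integrable bound `L` on `‖D_w𝒥‖` -/
  L : Ξ → ℝ
  L_int : Integrable L S.μ
  DJ_bound : ∀ w ∈ W₀, ∀ ξ : Ξ, ‖DJ w ξ‖ ≤ L ξ
  /-- the Fréchet derivative `D_w𝒢` of the constraint map -/
  DG : W → Ξ → (W →L[ℝ] R)
  DG_deriv : ∀ ξ : Ξ, ∀ w ∈ W₀, HasFDerivAt (fun w' => S.G w' ξ) (DG w ξ) w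
  DG_meas : ∀ w ∈ W₀, ∀ h : W, Measurable fun ξ => DG w ξ h
  /-- joint continuity of `𝒢` on `B(U₀) × Ξ` -/
  G_jcont : ContinuousOn (fun p : W × Ξ => S.G p.1 p.2) ((S.B '' U₀) ×ˢ Set.univ)
  /-- joint continuity of `D_w𝒢` on `B(U₀) × Ξ` -/
  DG_jcont : ContinuousOn (fun p : W × Ξ => DG p.1 p.2) ((S.B '' U₀) ×ˢ Set.univ)

namespace StandingSetup

variable {X W R R₀ Ξ Ω : Type*}
    [NormedAddCommGroup X] [NormedSpace ℝ X]
    [NormedAddCommGroup W] [NormedSpace ℝ W]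
    [NormedAddCommGroup R] [NormedSpace ℝ R]
    [NormedAddCommGroup R₀] [NormedSpace ℝ R₀]
    [MeasurableSpace R] [BorelSpace R] [MeasurableSpace R₀] [BorelSpace R₀]
    [MetricSpace Ξ] [CompactSpace Ξ] [MeasurableSpace Ξ] [BorelSpace Ξ]
    [MeasurableSpace Ω]
    (S : StandingSetup X W R R₀ Ξ Ω)

/-- the cone `𝒦 = {r ∈ C(Ξ;R) ∣ r(ξ) ∈ K for all ξ}` -/
def coneC : Set (ContinuousMap Ξ R) := {r | ∀ ξ, r ξ ∈ S.K}

/-- the convex subdifferential `∂ψ(u) ⊂ U*` of the regularizer -/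
def subdiff (u : StrongDual ℝ X) :
    Set (StrongDual ℝ (StrongDual ℝ X)) :=
  {η | S.ψ u ≠ ⊤ ∧ ∀ v, S.ψ v ≠ ⊤ → (S.ψ u).toReal + η (v - u) ≤ (S.ψ v).toReal}

variable (A : Assumption3 S)

/-- the KKT conditions of problem (P) at `(u, λ)`:
`0 ∈ DF(u) + ∂ψ(u) + D𝒢(u)*λ`, `λ ∈ 𝒦⁻`, `⟨λ, 𝒢(u)⟩ = 0`. -/
def KKTP (Gc : StrongDual ℝ X → ContinuousMap Ξ R)
    (DGc : StrongDual ℝ X → StrongDual ℝ X → ContinuousMap Ξ R)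
    (u : StrongDual ℝ X) (lam : StrongDual ℝ (ContinuousMap Ξ R)) : Prop :=
  (∃ η ∈ S.subdiff u, ∀ h : StrongDual ℝ X,
      (∫ ξ, A.DJ (S.B u) ξ (S.B h) ∂S.μ) + η h + lam (DGc u h) = 0) ∧
  (∀ k : ContinuousMap Ξ R, (∀ ξ, k ξ ∈ S.K) → lam k ≤ 0) ∧
  lam (Gc u) = 0

/-- the aggregated SAA KKT conditions (4.6) at `(u, λ)` for sample size `N` -/
def AggKKT (Gc : StrongDual ℝ X → ContinuousMap Ξ R)
    (DGc : StrongDual ℝ X → StrongDual ℝ X → ContinuousMap Ξ R)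
    (N : ℕ) (ω : Ω) (u : StrongDual ℝ X)
    (lam : StrongDual ℝ (ContinuousMap Ξ R)) : Prop :=
  (∃ η ∈ S.subdiff u, ∀ h : StrongDual ℝ X,
      ((N : ℝ)⁻¹ * ∑ i ∈ Finset.range N, A.DJ (S.B u) (S.samp i ω) (S.B h))
        + η h + lam (DGc u h) = 0) ∧
  (∀ k : ContinuousMap Ξ R, (∀ ξ, k ξ ∈ S.K) → lam k ≤ 0) ∧
  lam (Gc u) = 0 ∧
  ∀ i ∈ Finset.range N, S.G (S.B u) (S.samp i ω) ∈ S.K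

/-- the constraint qualification (CQ) of the paper at `u`:
there is `û ∈ dom ψ` with `𝒢(u) + D𝒢(u)(û − u) ∈ int 𝒦`. -/
def CQ (Gc : StrongDual ℝ X → ContinuousMap Ξ R)
    (DGc : StrongDual ℝ X → StrongDual ℝ X → ContinuousMap Ξ R)
    (u : StrongDual ℝ X) : Prop :=
  ∃ uhat, S.ψ uhat ≠ ⊤ ∧ Gc u + DGc u (uhat - u) ∈ interior S.coneC

end StandingSetup

/-! The derivative of `Φ(w) = ∫ 𝒥(w,ξ) dμ` on `W₀` is the weak integral
`k ↦ ∫ D_w𝒥(w,ξ) k dμ`: by the mean value inequality the difference quotients of `𝒥(·,ξ)` are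
dominated by `2 L(ξ)`, so dominated convergence applies to them, and likewise to the pairing
`(w, k) ↦ D_w𝒥(w,ξ) k`, which is therefore continuous on `W₀ × W`. Only the weak integral is
available because `ξ ↦ D_w𝒥(w,ξ)` need not be strongly measurable in the nonseparable dual `W*`.
Where `𝒥(w,·)` is not integrable, the same domination shows that `𝒥(w',·)` is not integrable for
`w'` near `w`, so the Bochner integral `Φ` vanishes near `w` and its derivative is `0` there.
Finally `B` is weakly*-to-strongly continuous, so composing with `B` turns continuity on
`W₀ × W` into weak*-to-strong continuity on `U₀ × U`. -/

open Metric Set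

theorem measurable_of_lowerSemicontinuous_of_measurableSet_epigraph
    {W α : Type*} [PseudoMetricSpace W] [MeasurableSpace α] {f : W → α → ℝ}
    (hf_lsc : ∀ a, LowerSemicontinuous fun w => f w a)
    (hf_epi : ∀ O : Set (W × ℝ), IsOpen O → MeasurableSet {a | ∃ p ∈ O, f p.1 a ≤ p.2})
    (w : W) : Measurable (f w) := by
  refine measurable_of_Iic fun c => ?_
  have key : f w ⁻¹' Iic c = ⋂ n : ℕ,
      {a | ∃ p ∈ ball w (1 / (n + 1)) ×ˢ Iio (c + 1 / (n + 1)), f p.1 a ≤ p.2} := by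
    ext a
    simp only [mem_preimage, mem_Iic, mem_iInter, mem_ofPred_eq]
    refine ⟨fun h n => ⟨(w, f w a), ⟨mem_ball_self (by positivity), ?_⟩, le_rfl⟩, fun h => ?_⟩
    · have : (0 : ℝ) < 1 / (n + 1) := by positivity
      exact mem_Iio.2 (by linarith)
    · by_contra! hlt
      obtain ⟨r, hr, hr_lsc⟩ :=
        Metric.eventually_nhds_iff.1 (hf_lsc a w ((c + f w a) / 2) (by linarith))
      obtain ⟨n, hn⟩ := exists_nat_one_div_lt (lt_min hr (show 0 < (f w a - c) / 2 by linarith))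
      obtain ⟨p, ⟨hp_ball, hp_lt⟩, hp_le⟩ := h n
      have := hr_lsc (lt_trans (mem_ball.1 hp_ball) (hn.trans_le (min_le_left _ _)))
      have := hn.trans_le (min_le_right _ _)
      have := mem_Iio.1 hp_lt
      linarith
  rw [key]
  exact MeasurableSet.iInter fun n => hf_epi _ (isOpen_ball.prod isOpen_Iio)

theorem WSTendsto.of_tendsto {X : Type*} [NormedAddCommGroup X] [NormedSpace ℝ X]
    {u : ℕ → StrongDual ℝ X} {u₀ : StrongDual ℝ X} (hu : Tendsto u atTop (𝓝 u₀)) :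
    WSTendsto u u₀ :=
  fun x => ((ContinuousLinearMap.apply ℝ ℝ x).continuous.tendsto u₀).comp hu

theorem continuous_of_forall_wsTendsto {X Y : Type*} [NormedAddCommGroup X] [NormedSpace ℝ X]
    [TopologicalSpace Y] {g : StrongDual ℝ X → Y}
    (hg : ∀ (u : ℕ → StrongDual ℝ X) (u₀ : StrongDual ℝ X),
      WSTendsto u u₀ → Tendsto (fun n => g (u n)) atTop (𝓝 (g u₀))) :
    Continuous g :=
  SeqContinuous.continuous fun _ _ hu => hg _ _ (WSTendsto.of_tendsto hu)

theorem ContinuousOn.tendsto_comp_prodMk {ι Y Z T : Type*} [TopologicalSpace Y]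
    [TopologicalSpace Z] [TopologicalSpace T] {P : Y × Z → T} {s : Set Y}
    (hP : ContinuousOn P (s ×ˢ univ)) {l : Filter ι} {y : ι → Y} {z : ι → Z} {y₀ : Y} {z₀ : Z}
    (hy : ∀ i, y i ∈ s) (hy₀ : y₀ ∈ s) (hy_lim : Tendsto y l (𝓝 y₀))
    (hz_lim : Tendsto z l (𝓝 z₀)) :
    Tendsto (fun i => P (y i, z i)) l (𝓝 (P (y₀, z₀))) :=
  (hP (y₀, z₀) ⟨hy₀, trivial⟩).tendsto.comp <| tendsto_nhdsWithin_iff.2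
    ⟨hy_lim.prodMk_nhds hz_lim, Eventually.of_forall fun i => ⟨hy i, trivial⟩⟩

section WeakIntegral

variable {α H E : Type*} [MeasurableSpace α] {μ : Measure α}
  [NormedAddCommGroup H] [NormedSpace ℝ H] [NormedAddCommGroup E] [NormedSpace ℝ E]
  {T : α → H →L[ℝ] E} {bound : α → ℝ}

theorem integrable_clm_apply_of_norm_le {h : H}
    (hT_meas : AEStronglyMeasurable (fun a => T a h) μ) (hT : ∀ᵐ a ∂μ, ‖T a‖ ≤ bound a)
    (hb : Integrable bound μ) : Integrable (fun a => T a h) μ :=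
  (hb.mul_const ‖h‖).mono' hT_meas (hT.mono fun a ha => (T a).le_of_opNorm_le ha h)

theorem exists_continuousLinearMap_eq_integral_apply
    (hT_meas : ∀ h, AEStronglyMeasurable (fun a => T a h) μ) (hT : ∀ᵐ a ∂μ, ‖T a‖ ≤ bound a)
    (hb : Integrable bound μ) : ∃ L : H →L[ℝ] E, ∀ h, L h = ∫ a, T a h ∂μ := by
  have hint h := integrable_clm_apply_of_norm_le (hT_meas h) hT hb
  let L : H →ₗ[ℝ] E :=
    { toFun := fun h => ∫ a, T a h ∂μ
      map_add' := fun h k => by simp only [map_add]; exact integral_add (hint h) (hint k)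
      map_smul' := fun c h => by simp only [map_smul, RingHom.id_apply]; exact integral_smul c _ }
  refine ⟨L.mkContinuous (∫ a, bound a ∂μ) fun h => ?_, fun h => rfl⟩
  calc ‖∫ a, T a h ∂μ‖ ≤ ∫ a, bound a * ‖h‖ ∂μ :=
        norm_integral_le_of_norm_le (hb.mul_const _)
          (hT.mono fun a ha => (T a).le_of_opNorm_le ha h)
    _ = (∫ a, bound a ∂μ) * ‖h‖ := integral_mul_const _ _

theorem hasFDerivAt_integral_of_lip_of_weaklyMeasurable {F : H → α → E} {x₀ : H} {s : Set H}
    {L : H →L[ℝ] E} (hs : s ∈ 𝓝 x₀) (hF_meas : ∀ x ∈ s, AEStronglyMeasurable (F x) μ)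
    (hF_int : Integrable (F x₀) μ) (hT_meas : ∀ h, AEStronglyMeasurable (fun a => T a h) μ)
    (h_lip : ∀ᵐ a ∂μ, ∀ x ∈ s, ‖F x a - F x₀ a‖ ≤ bound a * ‖x - x₀‖)
    (hb : Integrable bound μ) (h_diff : ∀ᵐ a ∂μ, HasFDerivAt (F · a) (T a) x₀)
    (hL : ∀ h, L h = ∫ a, T a h ∂μ) :
    HasFDerivAt (fun x => ∫ a, F x a ∂μ) L x₀ := by
  set b : α → ℝ := fun a => |bound a|
  have hb' : Integrable b μ := hb.abs
  replace h_lip : ∀ᵐ a ∂μ, ∀ x ∈ s, ‖F x a - F x₀ a‖ ≤ b a * ‖x - x₀‖ :=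
    h_lip.mono fun a ha x hx => (ha x hx).trans (by gcongr; exact le_abs_self _)
  have hT : ∀ᵐ a ∂μ, ‖T a‖ ≤ b a := (h_diff.and h_lip).mono fun a ha =>
    ha.1.le_of_lip' (abs_nonneg _) (mem_of_superset hs ha.2)
  have hF_int' : ∀ x ∈ s, Integrable (F x) μ := fun x hx =>
    integrable_of_norm_sub_le (hF_meas x hx) hF_int (hb'.mul_const ‖x - x₀‖)
      (h_lip.mono fun a ha => by rw [norm_sub_rev]; exact ha x hx)
  have hT_int h := integrable_clm_apply_of_norm_le (hT_meas h) hT hb'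
  have h_quot : ∀ᶠ x in 𝓝 x₀,
      ‖x - x₀‖⁻¹ * ‖(∫ a, F x a ∂μ) - (∫ a, F x₀ a ∂μ) - L (x - x₀)‖ =
        ‖∫ a, ‖x - x₀‖⁻¹ • (F x a - F x₀ a - T a (x - x₀)) ∂μ‖ := by
    filter_upwards [hs] with x hx
    rw [hL, ← norm_smul_of_nonneg (inv_nonneg.2 (norm_nonneg _)), integral_smul, integral_sub,
      integral_sub]
    exacts [hF_int' x hx, hF_int, (hF_int' x hx).sub hF_int, hT_int _]
  rw [hasFDerivAt_iff_tendsto, tendsto_congr' h_quot, ← tendsto_zero_iff_norm_tendsto_zero,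
    ← show (∫ a, ‖x₀ - x₀‖⁻¹ • (F x₀ a - F x₀ a - T a (x₀ - x₀)) ∂μ) = 0 by simp]
  refine tendsto_integral_filter_of_dominated_convergence (fun a => 2 * b a) ?_ ?_
    (hb'.const_mul 2) ?_
  · filter_upwards [hs] with x hx
    exact (((hF_meas x hx).sub (hF_meas x₀ (mem_of_mem_nhds hs))).sub (hT_meas _)).const_smul _
  · filter_upwards [hs] with x hx
    filter_upwards [h_lip, hT] with a ha_lip ha_T
    rw [norm_smul_of_nonneg (inv_nonneg.2 (norm_nonneg _))]
    refine inv_mul_le_of_le_mul₀ (norm_nonneg _) (by positivity) ?_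
    calc ‖F x a - F x₀ a - T a (x - x₀)‖ ≤ ‖F x a - F x₀ a‖ + ‖T a (x - x₀)‖ := norm_sub_le _ _
      _ ≤ b a * ‖x - x₀‖ + b a * ‖x - x₀‖ :=
        add_le_add (ha_lip x hx) ((T a).le_of_opNorm_le ha_T _)
      _ = ‖x - x₀‖ * (2 * b a) := by ring
  · filter_upwards [h_diff] with a ha
    rw [hasFDerivAt_iff_tendsto] at ha
    simpa only [sub_self, map_zero, smul_zero, tendsto_zero_iff_norm_tendsto_zero, norm_smul,
      norm_inv, norm_norm] using ha

end WeakIntegral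

theorem norm_sub_le_of_mem_ball {α W E : Type*} [NormedAddCommGroup W] [NormedSpace ℝ W]
    [NormedAddCommGroup E] [NormedSpace ℝ E] {f : W → α → E} {f' : W → α → W →L[ℝ] E}
    {s : Set W} {bound : α → ℝ} (hf' : ∀ a, ∀ w ∈ s, HasFDerivAt (f · a) (f' w a) w)
    (hbound : ∀ w ∈ s, ∀ a, ‖f' w a‖ ≤ bound a) {w₀ w : W} {ε : ℝ} (hball : ball w₀ ε ⊆ s)
    (hw : w ∈ ball w₀ ε) (a : α) : ‖f w a - f w₀ a‖ ≤ bound a * ‖w - w₀‖ :=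
  (convex_ball w₀ ε).norm_image_sub_le_of_norm_hasFDerivWithin_le
    (fun v hv => (hf' a v (hball hv)).hasFDerivWithinAt) (fun v hv => hbound v (hball hv) a)
    (mem_ball_self (pos_of_mem_ball hw)) hw

section ParametricIntegral

variable {α W E : Type*} [MeasurableSpace α] {μ : Measure α}
  [NormedAddCommGroup W] [NormedSpace ℝ W] [NormedAddCommGroup E] [NormedSpace ℝ E]
  {f : W → α → E} {f' : W → α → W →L[ℝ] E} {s : Set W} {bound : α → ℝ}

theorem eventually_integrable_iff (hs : IsOpen s) (hf_meas : ∀ w, AEStronglyMeasurable (f w) μ)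
    (hf' : ∀ a, ∀ w ∈ s, HasFDerivAt (f · a) (f' w a) w)
    (hbound : ∀ w ∈ s, ∀ a, ‖f' w a‖ ≤ bound a) (hb : Integrable bound μ) {w₀ : W}
    (hw₀ : w₀ ∈ s) : ∀ᶠ w in 𝓝 w₀, Integrable (f w) μ ↔ Integrable (f w₀) μ := by
  obtain ⟨ε, hε, hball⟩ := Metric.isOpen_iff.1 hs w₀ hw₀
  filter_upwards [ball_mem_nhds w₀ hε] with w hw
  have hle : ∀ᵐ a ∂μ, ‖f w a - f w₀ a‖ ≤ bound a * ‖w - w₀‖ :=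
    ae_of_all _ (norm_sub_le_of_mem_ball hf' hbound hball hw)
  exact ⟨fun h => integrable_of_norm_sub_le (hf_meas w₀) h (hb.mul_const _) hle,
    fun h => integrable_of_norm_sub_le (hf_meas w) h (hb.mul_const _)
      (by simpa only [norm_sub_rev] using hle)⟩

theorem integral_eventuallyEq_zero_of_not_integrable (hs : IsOpen s)
    (hf_meas : ∀ w, AEStronglyMeasurable (f w) μ)
    (hf' : ∀ a, ∀ w ∈ s, HasFDerivAt (f · a) (f' w a) w)
    (hbound : ∀ w ∈ s, ∀ a, ‖f' w a‖ ≤ bound a) (hb : Integrable bound μ) {w₀ : W}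
    (hw₀ : w₀ ∈ s) (hint : ¬Integrable (f w₀) μ) :
    (fun w => ∫ a, f w a ∂μ) =ᶠ[𝓝 w₀] 0 := by
  filter_upwards [eventually_integrable_iff hs hf_meas hf' hbound hb hw₀] with w hw
  exact integral_undef (mt hw.1 hint)

theorem hasFDerivAt_integral_of_integrable (hs : IsOpen s)
    (hf_meas : ∀ w, AEStronglyMeasurable (f w) μ)
    (hf' : ∀ a, ∀ w ∈ s, HasFDerivAt (f · a) (f' w a) w)
    (hf'_meas : ∀ w ∈ s, ∀ k, AEStronglyMeasurable (fun a => f' w a k) μ)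
    (hbound : ∀ w ∈ s, ∀ a, ‖f' w a‖ ≤ bound a) (hb : Integrable bound μ) {w₀ : W}
    (hw₀ : w₀ ∈ s) (hint : Integrable (f w₀) μ) :
    ∃ L : W →L[ℝ] E, HasFDerivAt (fun w => ∫ a, f w a ∂μ) L w₀ ∧
      ∀ k, L k = ∫ a, f' w₀ a k ∂μ := by
  obtain ⟨ε, hε, hball⟩ := Metric.isOpen_iff.1 hs w₀ hw₀
  obtain ⟨L, hL⟩ := exists_continuousLinearMap_eq_integral_apply (hf'_meas w₀ hw₀)
    (ae_of_all _ (hbound w₀ hw₀)) hb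
  refine ⟨L, hasFDerivAt_integral_of_lip_of_weaklyMeasurable (ball_mem_nhds w₀ hε)
    (fun w _ => hf_meas w) hint (hf'_meas w₀ hw₀) ?_ hb (ae_of_all _ fun a => hf' a w₀ hw₀) hL, hL⟩
  exact ae_of_all _ fun a w hw => norm_sub_le_of_mem_ball hf' hbound hball hw a

theorem differentiableAt_integral (hs : IsOpen s) (hf_meas : ∀ w, AEStronglyMeasurable (f w) μ)
    (hf' : ∀ a, ∀ w ∈ s, HasFDerivAt (f · a) (f' w a) w)
    (hf'_meas : ∀ w ∈ s, ∀ k, AEStronglyMeasurable (fun a => f' w a k) μ)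
    (hbound : ∀ w ∈ s, ∀ a, ‖f' w a‖ ≤ bound a) (hb : Integrable bound μ) {w₀ : W}
    (hw₀ : w₀ ∈ s) : DifferentiableAt ℝ (fun w => ∫ a, f w a ∂μ) w₀ := by
  by_cases hint : Integrable (f w₀) μ
  · obtain ⟨L, hL, -⟩ :=
      hasFDerivAt_integral_of_integrable hs hf_meas hf' hf'_meas hbound hb hw₀ hint
    exact hL.differentiableAt
  · exact (differentiableAt_const 0).congr_of_eventuallyEq
      (integral_eventuallyEq_zero_of_not_integrable hs hf_meas hf' hbound hb hw₀ hint)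

theorem continuousOn_fderiv_integral_apply (hs : IsOpen s)
    (hf_meas : ∀ w, AEStronglyMeasurable (f w) μ)
    (hf' : ∀ a, ∀ w ∈ s, HasFDerivAt (f · a) (f' w a) w)
    (hf'_meas : ∀ w ∈ s, ∀ k, AEStronglyMeasurable (fun a => f' w a k) μ)
    (hf'_cont : ∀ a, ContinuousOn (f' · a) s)
    (hbound : ∀ w ∈ s, ∀ a, ‖f' w a‖ ≤ bound a) (hb : Integrable bound μ) :
    ContinuousOn (fun p : W × W => fderiv ℝ (fun w => ∫ a, f w a ∂μ) p.1 p.2) (s ×ˢ univ) := by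
  rintro ⟨w₀, k₀⟩ ⟨hw₀, -⟩
  have h_near : ∀ᶠ p : W × W in 𝓝 (w₀, k₀),
      p.1 ∈ s ∧ (Integrable (f p.1) μ ↔ Integrable (f w₀) μ) :=
    (continuous_fst.tendsto (w₀, k₀)).eventually
      ((hs.eventually_mem hw₀).and (eventually_integrable_iff hs hf_meas hf' hbound hb hw₀))
  by_cases hint : Integrable (f w₀) μ
  · have h_eq : ∀ᶠ p : W × W in 𝓝 (w₀, k₀),
        fderiv ℝ (fun w => ∫ a, f w a ∂μ) p.1 p.2 = ∫ a, f' p.1 a p.2 ∂μ := by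
      filter_upwards [h_near] with p ⟨hp, hp_int⟩
      obtain ⟨L, hL, hL_apply⟩ :=
        hasFDerivAt_integral_of_integrable hs hf_meas hf' hf'_meas hbound hb hp (hp_int.2 hint)
      rw [hL.fderiv, hL_apply]
    refine ContinuousWithinAt.congr_of_eventuallyEq ?_
      (eventually_nhdsWithin_of_eventually_nhds h_eq) h_eq.self_of_nhds
    have hk : ∀ᶠ p : W × W in 𝓝 (w₀, k₀), ‖p.2‖ ≤ ‖k₀‖ + 1 :=
      (continuous_snd.norm.tendsto (w₀, k₀)).eventually (eventually_le_nhds (lt_add_one _))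
    refine tendsto_integral_filter_of_dominated_convergence (fun a => bound a * (‖k₀‖ + 1)) ?_ ?_
      (hb.mul_const _) ?_
    · filter_upwards [self_mem_nhdsWithin] with p hp
      exact hf'_meas p.1 hp.1 p.2
    · filter_upwards [self_mem_nhdsWithin, nhdsWithin_le_nhds hk] with p hp hp_k
      exact ae_of_all _ fun a => (f' p.1 a).le_of_opNorm_le_of_le (hbound p.1 hp.1 a) hp_k
    · exact ae_of_all _ fun a => ((hf'_cont a).comp continuousOn_fst fun p hp => hp.1).clm_apply
        continuousOn_snd (w₀, k₀) ⟨hw₀, trivial⟩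
  · have h_eq : ∀ᶠ p : W × W in 𝓝 (w₀, k₀), fderiv ℝ (fun w => ∫ a, f w a ∂μ) p.1 p.2 = 0 := by
      filter_upwards [h_near] with p ⟨hp, hp_int⟩
      rw [(integral_eventuallyEq_zero_of_not_integrable hs hf_meas hf' hbound hb hp
        (mt hp_int.1 hint)).fderiv_eq, fderiv_zero]
      rfl
    exact continuousWithinAt_const.congr_of_eventuallyEq
      (eventually_nhdsWithin_of_eventually_nhds h_eq) h_eq.self_of_nhds

end ParametricIntegral

theorem F_differentiable_and_derivatives_weak_star_to_strong_continuous_general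
    {X W R R₀ Ξ Ω : Type*}
    [NormedAddCommGroup X] [NormedSpace ℝ X]
    [NormedAddCommGroup W] [NormedSpace ℝ W]
    [NormedAddCommGroup R] [NormedSpace ℝ R]
    [NormedAddCommGroup R₀] [NormedSpace ℝ R₀]
    [MeasurableSpace R] [BorelSpace R] [MeasurableSpace R₀] [BorelSpace R₀]
    [MetricSpace Ξ] [CompactSpace Ξ]
    [MeasurableSpace Ξ] [BorelSpace Ξ] [MeasurableSpace Ω]
    (S : StandingSetup X W R R₀ Ξ Ω) (A : Assumption3 S) :
    (∃ DF : StrongDual ℝ X → StrongDual ℝ (StrongDual ℝ X),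
      (∀ u ∈ A.U₀, HasFDerivAt (fun v : StrongDual ℝ X => ∫ ξ, S.J (S.B v) ξ ∂S.μ) (DF u) u) ∧
      ∀ (useq hseq : ℕ → StrongDual ℝ X) (u₀ h₀ : StrongDual ℝ X),
        (∀ n, useq n ∈ A.U₀) → u₀ ∈ A.U₀ →
        WSTendsto useq u₀ → WSTendsto hseq h₀ →
        Tendsto (fun n => DF (useq n) (hseq n)) atTop (𝓝 (DF u₀ h₀))) ∧
    (∀ ξ : Ξ, ∀ (useq hseq : ℕ → StrongDual ℝ X) (u₀ h₀ : StrongDual ℝ X),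
      (∀ n, useq n ∈ A.U₀) → u₀ ∈ A.U₀ →
      WSTendsto useq u₀ → WSTendsto hseq h₀ →
      Tendsto (fun n => A.DG (S.B (useq n)) ξ (S.B (hseq n))) atTop
        (𝓝 (A.DG (S.B u₀) ξ (S.B h₀)))) := by
  let Φ : W → ℝ := fun w => ∫ ξ, S.J w ξ ∂S.μ
  have hJ_meas w : AEStronglyMeasurable (S.J w) S.μ :=
    (measurable_of_lowerSemicontinuous_of_measurableSet_epigraph S.J_lsc S.J_effros
      w).aestronglyMeasurable
  have hDJ_meas w (hw : w ∈ A.W₀) k : AEStronglyMeasurable (fun ξ => A.DJ w ξ k) S.μ :=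
    (A.DJ_meas w hw k).aestronglyMeasurable
  have hBW₀ u (hu : u ∈ A.U₀) : S.B u ∈ A.W₀ := A.BU₀_sub ⟨u, hu, rfl⟩
  let B : StrongDual ℝ X →L[ℝ] W := ⟨S.B, continuous_of_forall_wsTendsto S.B_wsc⟩
  refine ⟨⟨fun u => (fderiv ℝ Φ (S.B u)).comp B, fun u hu => ?_, ?_⟩, ?_⟩
  · exact (differentiableAt_integral A.W₀_open hJ_meas A.DJ_deriv hDJ_meas A.DJ_bound A.L_int
      (hBW₀ u hu)).hasFDerivAt.comp u B.hasFDerivAt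
  · intro useq hseq u₀ h₀ hU hu₀ hu hh
    exact (continuousOn_fderiv_integral_apply A.W₀_open hJ_meas A.DJ_deriv hDJ_meas A.DJ_cont
      A.DJ_bound A.L_int).tendsto_comp_prodMk (fun n => hBW₀ _ (hU n)) (hBW₀ _ hu₀)
      (S.B_wsc _ _ hu) (S.B_wsc _ _ hh)
  · intro ξ useq hseq u₀ h₀ hU hu₀ hu hh
    have hDG : ContinuousOn (fun p : W × W => A.DG p.1 ξ p.2) ((S.B '' A.U₀) ×ˢ univ) :=
      (A.DG_jcont.comp (continuousOn_fst.prodMk continuousOn_const) fun p hp =>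
        ⟨hp.1, trivial⟩).clm_apply continuousOn_snd
    exact hDG.tendsto_comp_prodMk (fun n => ⟨_, hU n, rfl⟩) ⟨_, hu₀, rfl⟩ (S.B_wsc _ _ hu)
      (S.B_wsc _ _ hh)

/-- Under Assumptions 1 and 3, `F` is Fréchet differentiable on `U₀` and
`(u,h) ↦ ⟨DF(u), h⟩` is weakly*-to-strongly continuous; moreover, for every `ξ ∈ Ξ`, the
map `(u,h) ↦ D_uG(u,ξ)h = D_w𝒢(Bu,ξ)Bh` is weakly*-to-strongly continuous into `R`. -/
theorem F_differentiable_and_derivatives_weak_star_to_strong_continuous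
    {X W R R₀ Ξ Ω : Type*}
    [NormedAddCommGroup X] [NormedSpace ℝ X] [SeparableSpace X] [CompleteSpace X]
    [NormedAddCommGroup W] [NormedSpace ℝ W] [SeparableSpace W] [CompleteSpace W]
    [NormedAddCommGroup R] [NormedSpace ℝ R] [SeparableSpace R] [CompleteSpace R]
    [NormedAddCommGroup R₀] [NormedSpace ℝ R₀] [SeparableSpace R₀] [CompleteSpace R₀]
    [MeasurableSpace R] [BorelSpace R] [MeasurableSpace R₀] [BorelSpace R₀]
    [MetricSpace Ξ] [CompactSpace Ξ] [SeparableSpace Ξ]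
    [MeasurableSpace Ξ] [BorelSpace Ξ] [MeasurableSpace Ω]
    (S : StandingSetup X W R R₀ Ξ Ω) (A : Assumption3 S) :
    (∃ DF : StrongDual ℝ X → StrongDual ℝ (StrongDual ℝ X),
      (∀ u ∈ A.U₀, HasFDerivAt (fun v : StrongDual ℝ X => ∫ ξ, S.J (S.B v) ξ ∂S.μ) (DF u) u) ∧
      ∀ (useq hseq : ℕ → StrongDual ℝ X) (u₀ h₀ : StrongDual ℝ X),
        (∀ n, useq n ∈ A.U₀) → u₀ ∈ A.U₀ →
        WSTendsto useq u₀ → WSTendsto hseq h₀ →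
        Tendsto (fun n => DF (useq n) (hseq n)) atTop (𝓝 (DF u₀ h₀))) ∧
    (∀ ξ : Ξ, ∀ (useq hseq : ℕ → StrongDual ℝ X) (u₀ h₀ : StrongDual ℝ X),
      (∀ n, useq n ∈ A.U₀) → u₀ ∈ A.U₀ →
      WSTendsto useq u₀ → WSTendsto hseq h₀ →
      Tendsto (fun n => A.DG (S.B (useq n)) ξ (S.B (hseq n))) atTop
        (𝓝 (A.DG (S.B u₀) ξ (S.B h₀)))) :=
  F_differentiable_and_derivatives_weak_star_to_strong_continuous_general S A
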